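/- Let n ≥ 1 and let L be a real symmetric n×n matrix with spectral decomposition L = U·diag(λ₁,…,λₙ)·Uᵀ, where U is an orthogonal matrix whose columns are eigenvectors and the eigenvalues λ₁,…,λₙ are pairwise distinct. Let x ∈ ℝⁿ be a vector such that every entry of Uᵀx is nonzero (i.e., x is not orthogonal to any eigenvector). Then for every vector y ∈ ℝⁿ there exists a function h : ℝ → ℝ such that U·diag(h(λ₁),…,h(λₙ))·Uᵀ·x = y. In particular, if the entries of y take only the values 1 and −1 (two node classes), a spectral filter h achieving perfect node classification exists. -/
import Mathlib


open Matrix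
/-- Paper's Theorem 1, via its proof in Appendix C.
Let `n ≥ 1` and let `L` be a real symmetric `n × n` matrix with spectral decomposition
`L = U * diagonal lam * Uᵀ`, where `U` is orthogonal and the eigenvalues `lam i` are
pairwise distinct.  If `x` is a vector such that every entry of `Uᵀ ⬝ x` is nonzero
(i.e. `x` is not orthogonal to any eigenvector), then for every vector `y` there is a
spectral filter `h : ℝ → ℝ` with `U * diagonal (h ∘ lam) * Uᵀ ⬝ x = y`. -/
theorem spectral_filter_exists
    (n : ℕ) (hn : 1 ≤ n)
    (L U : Matrix (Fin n) (Fin n) ℝ)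
    (hLsymm : L.IsSymm)
    (hU₁ : U * Uᵀ = 1) (hU₂ : Uᵀ * U = 1)
    (lam : Fin n → ℝ)
    (hdec : L = U * Matrix.diagonal lam * Uᵀ)
    (hdist : Function.Injective lam)
    (x : Fin n → ℝ)
    (hx : ∀ i : Fin n, (Uᵀ).mulVec x i ≠ 0) :
    ∀ y : Fin n → ℝ, ∃ h : ℝ → ℝ,
      (U * Matrix.diagonal (fun i => h (lam i)) * Uᵀ).mulVec x = y := by
  intro y
  classical
  refine ⟨fun t => if ht : ∃ i, lam i = t then
      (Uᵀ.mulVec y ht.choose) / (Uᵀ.mulVec x ht.choose) else 0, ?_⟩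
  have hdiag : ∀ i, (if ht : ∃ j, lam j = lam i then
      (Uᵀ.mulVec y ht.choose) / (Uᵀ.mulVec x ht.choose) else 0)
      = Uᵀ.mulVec y i / Uᵀ.mulVec x i := by
    intro i
    have hex : ∃ j, lam j = lam i := ⟨i, rfl⟩
    rw [dif_pos hex]
    have : hex.choose = i := hdist hex.choose_spec
    rw [this]
  have key : Matrix.mulVec (Matrix.diagonal fun i =>
      (if ht : ∃ j, lam j = lam i then (Uᵀ.mulVec y ht.choose) / (Uᵀ.mulVec x ht.choose)
        else 0)) (Uᵀ.mulVec x) = Uᵀ.mulVec y := by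
    funext i
    rw [Matrix.mulVec_diagonal, hdiag i, div_mul_cancel₀ _ (hx i)]
  calc (U * Matrix.diagonal _ * Uᵀ).mulVec x
      = U.mulVec (Matrix.mulVec (Matrix.diagonal _) (Uᵀ.mulVec x)) := by
        rw [← Matrix.mulVec_mulVec, ← Matrix.mulVec_mulVec]
    _ = U.mulVec (Uᵀ.mulVec y) := by rw [key]
    _ = y := by rw [Matrix.mulVec_mulVec, hU₁, Matrix.one_mulVec]
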